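/- arXiv:math/0510677 — 4 statements merged into one kernel-verified Lean document; each statement's English description precedes it below -/
import Mathlib

section
/- Let A be a unital complex Banach algebra, C, M ≥ 0 and δ > 0 constants, and Y, Z : ℝ → A functions such that for all s ∈ (0, δ]: ‖Y(s)‖ ≤ exp(sC), ‖Z(s)‖ ≤ exp(sC), and ‖Y(s) − Z(s)‖ ≤ M s². Then for every finite list t = (t_1, …, t_n) of reals with 0 < t_k ≤ δ, setting t := t_1 + ⋯ + t_n and ‖t‖ := max_k t_k, one has ‖Y(t_1) Y(t_2) ⋯ Y(t_n) − Z(t_1) Z(t_2) ⋯ Z(t_n)‖ ≤ ‖t‖ · t · exp(tC) · M. -/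
section aux
variable {A : Type*} [NormedRing A] [NormOneClass A] (C M δ : ℝ)
  (hC : 0 ≤ C) (hM : 0 ≤ M) (Y Z : ℝ → A)
  (hY : ∀ s ∈ Set.Ioc (0 : ℝ) δ, ‖Y s‖ ≤ Real.exp (s * C))
  (hZ : ∀ s ∈ Set.Ioc (0 : ℝ) δ, ‖Z s‖ ≤ Real.exp (s * C))
  (hYZ : ∀ s ∈ Set.Ioc (0 : ℝ) δ, ‖Y s - Z s‖ ≤ M * s ^ 2)

include hY in
theorem aux_prod : ∀ l : List ℝ, (∀ s ∈ l, s ∈ Set.Ioc (0 : ℝ) δ) →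
    ‖(l.map Y).prod‖ ≤ Real.exp (l.sum * C) := by
  intro l
  induction l with
  | nil => simp
  | cons a l ih =>
    intro h
    simp only [List.map_cons, List.prod_cons, List.sum_cons, add_mul, Real.exp_add]
    calc ‖Y a * (l.map Y).prod‖ ≤ ‖Y a‖ * ‖(l.map Y).prod‖ := norm_mul_le _ _
    _ ≤ Real.exp (a * C) * Real.exp (l.sum * C) := by
        apply mul_le_mul (hY a (h a (by simp))) (ih fun s hs => h s (by simp [hs]))
          (norm_nonneg _) (Real.exp_nonneg _)

include hC hM hY hZ hYZ in
theorem aux_key : ∀ l : List ℝ, (∀ s ∈ l, s ∈ Set.Ioc (0 : ℝ) δ) →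
    ‖(l.map Y).prod - (l.map Z).prod‖ ≤ M * (l.map (· ^ 2)).sum * Real.exp (l.sum * C) := by
  intro l
  induction l with
  | nil => simp
  | cons a l ih =>
    intro h
    have ha : a ∈ Set.Ioc (0 : ℝ) δ := h a (by simp)
    have hl : ∀ s ∈ l, s ∈ Set.Ioc (0 : ℝ) δ := fun s hs => h s (by simp [hs])
    have hsum : 0 ≤ l.sum := List.sum_nonneg fun s hs => (hl s hs).1.le
    have hsq : 0 ≤ (l.map (· ^ 2)).sum := List.sum_nonneg (by
      intro x hx; simp only [List.mem_map] at hx; obtain ⟨s, _, rfl⟩ := hx; positivity)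
    simp only [List.map_cons, List.prod_cons, List.sum_cons]
    have key : Y a * (l.map Y).prod - Z a * (l.map Z).prod
        = (Y a - Z a) * (l.map Y).prod + Z a * ((l.map Y).prod - (l.map Z).prod) := by
      noncomm_ring
    rw [key]
    have h1 : ‖(Y a - Z a) * (l.map Y).prod‖ ≤ M * a ^ 2 * Real.exp (l.sum * C) :=
      (norm_mul_le _ _).trans (mul_le_mul (hYZ a ha) (aux_prod C δ Y hY l hl)
        (norm_nonneg _) (by positivity))
    have h2 : ‖Z a * ((l.map Y).prod - (l.map Z).prod)‖
        ≤ Real.exp (a * C) * (M * (l.map (· ^ 2)).sum * Real.exp (l.sum * C)) :=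
      (norm_mul_le _ _).trans (mul_le_mul (hZ a ha) (ih hl) (norm_nonneg _)
        (Real.exp_nonneg _))
    calc _ ≤ ‖(Y a - Z a) * (l.map Y).prod‖ + ‖Z a * ((l.map Y).prod - (l.map Z).prod)‖ :=
          norm_add_le _ _
      _ ≤ M * a ^ 2 * Real.exp (l.sum * C)
          + Real.exp (a * C) * (M * (l.map (· ^ 2)).sum * Real.exp (l.sum * C)) :=
          add_le_add h1 h2
      _ ≤ M * (a ^ 2 + (l.map (· ^ 2)).sum) * Real.exp ((a + l.sum) * C) := by
          rw [add_mul, Real.exp_add]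
          have hE1 : 1 ≤ Real.exp (a * C) :=
            Real.one_le_exp (mul_nonneg ha.1.le hC)
          nlinarith [mul_nonneg (mul_nonneg (mul_nonneg hM (sq_nonneg a))
            (Real.exp_nonneg (l.sum * C))) (sub_nonneg.2 hE1)]
end aux

/-- The key quantitative estimate (3.4) in the proof of Proposition 3.3: if
`‖Y s‖ ≤ exp (s C)`, `‖Z s‖ ≤ exp (s C)` and `‖Y s − Z s‖ ≤ M s²` for `s ∈ (0, δ]`, then for
any tuple `t = (t₁, …, tₙ)` with `0 < tₖ ≤ δ`, writing `t := Σ tₖ` for the length and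
`‖t‖ := max tₖ` for the mesh, `‖∏ Y(tₖ) − ∏ Z(tₖ)‖ ≤ ‖t‖ · t · exp (t C) · M`. -/
theorem stmt_5 {A : Type*} [NormedRing A] [NormOneClass A] [NormedAlgebra ℂ A]
    [CompleteSpace A] (C M δ : ℝ) (hC : 0 ≤ C) (hM : 0 ≤ M) (hδ : 0 < δ) (Y Z : ℝ → A)
    (hY : ∀ s ∈ Set.Ioc (0 : ℝ) δ, ‖Y s‖ ≤ Real.exp (s * C))
    (hZ : ∀ s ∈ Set.Ioc (0 : ℝ) δ, ‖Z s‖ ≤ Real.exp (s * C))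
    (hYZ : ∀ s ∈ Set.Ioc (0 : ℝ) δ, ‖Y s - Z s‖ ≤ M * s ^ 2) :
    ∀ (n : ℕ) (t : Fin n → ℝ), (∀ k, t k ∈ Set.Ioc (0 : ℝ) δ) →
      ‖(List.ofFn fun k => Y (t k)).prod - (List.ofFn fun k => Z (t k)).prod‖ ≤
        (⨆ k, t k) * (∑ k, t k) * Real.exp ((∑ k, t k) * C) * M := by
  intro n t ht
  rcases Nat.eq_zero_or_pos n with rfl | hn
  · simp [ciSup_of_empty]
  have : Nonempty (Fin n) := ⟨⟨0, hn⟩⟩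
  have hl : ∀ s ∈ List.ofFn t, s ∈ Set.Ioc (0 : ℝ) δ := by
    intro s hs; rw [List.mem_ofFn] at hs; obtain ⟨k, rfl⟩ := hs; exact ht k
  have h := aux_key C M δ hC hM Y Z hY hZ hYZ (List.ofFn t) hl
  have e1 : (List.ofFn t).map Y = List.ofFn fun k => Y (t k) := by
    rw [List.map_ofFn]; rfl
  have e2 : (List.ofFn t).map Z = List.ofFn fun k => Z (t k) := by
    rw [List.map_ofFn]; rfl
  have e3 : (List.ofFn t).sum = ∑ k, t k := List.sum_ofFn
  rw [e1, e2, e3] at h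
  refine h.trans ?_
  have hbdd : BddAbove (Set.range t) := (Set.finite_range t).bddAbove
  have hsq : ((List.ofFn t).map (· ^ 2)).sum ≤ (⨆ k, t k) * ∑ k, t k := by
    have : ((List.ofFn t).map (· ^ 2)).sum = ∑ k, (t k) ^ 2 := by
      rw [List.map_ofFn]; exact List.sum_ofFn
    rw [this, Finset.mul_sum]
    apply Finset.sum_le_sum
    intro k _
    have h1 : t k ≤ ⨆ j, t j := le_ciSup hbdd k
    have h2 : 0 ≤ t k := (ht k).1.le
    nlinarith
  have : M * ((List.ofFn t).map (· ^ 2)).sum ≤ M * ((⨆ k, t k) * ∑ k, t k) := by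
    exact mul_le_mul_of_nonneg_left hsq hM
  nlinarith [Real.exp_pos ((∑ k, t k) * C)]
end

section
/- Let A be a unital complex Banach algebra, K ∈ A, M ≥ 0 and 0 < δ ≤ 1, and suppose Y : ℝ → A satisfies ‖Y(s) − 1 − s·K‖ ≤ M s² for all s ∈ (0, δ]. Then for every finite list (t_1, …, t_n) of reals with 0 < t_k ≤ δ, setting t := t_1 + ⋯ + t_n and ‖t‖ := max_k t_k, one has ‖Y(t_1) Y(t_2) ⋯ Y(t_n) − exp(tK)‖ ≤ ‖t‖ · t · exp(t(‖K‖ + M)) · (M + ‖K‖² exp(t‖K‖)). -/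
/-! Both `Y s` and `exp (s • K)` equal `1 + s • K` up to `O(s²)`: their difference has norm at most
`s² (M + ‖K‖² e^{s‖K‖})`, and both have norm at most `e^{s(‖K‖+M)}`. Since the `tₖ • K` commute,
`exp ((Σ tₖ) • K) = ∏ exp (tₖ • K)`, and telescoping the two ordered products bounds the error by
`(Σ tₖ²) (M + ‖K‖² e^{t‖K‖}) e^{t(‖K‖+M)}`; finally `Σ tₖ² ≤ (max tₖ) Σ tₖ`. -/

open NormedSpace Finset
open scoped Nat

section Telescoping

variable {A : Type*} [NormedRing A] [NormOneClass A]

theorem norm_prod_ofFn_le {n : ℕ} (g : Fin n → A) (r : Fin n → ℝ) (hg : ∀ k, ‖g k‖ ≤ r k) :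
    ‖(List.ofFn g).prod‖ ≤ ∏ k, r k := by
  refine (List.norm_prod_le _).trans ?_
  rw [List.map_ofFn, List.prod_ofFn]
  exact prod_le_prod (fun k _ => norm_nonneg _) fun k _ => hg k

theorem norm_prod_ofFn_sub_prod_ofFn_le {n : ℕ} (f g : Fin n → A) (r : Fin n → ℝ)
    (hr : ∀ k, 1 ≤ r k) (hf : ∀ k, ‖f k‖ ≤ r k) (hg : ∀ k, ‖g k‖ ≤ r k) :
    ‖(List.ofFn f).prod - (List.ofFn g).prod‖ ≤ (∑ k, ‖f k - g k‖) * ∏ k, r k := by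
  induction n with
  | zero => simp
  | succ n ih =>
    set P := (List.ofFn fun k : Fin n => f k.succ).prod
    set Q := (List.ofFn fun k : Fin n => g k.succ).prod
    set R := ∏ k : Fin n, r k.succ
    have hR : 0 ≤ R := prod_nonneg fun k _ => zero_le_one.trans (hr _)
    have hPQ : ‖P - Q‖ ≤ (∑ k : Fin n, ‖f k.succ - g k.succ‖) * R :=
      ih _ _ _ (fun k => hr _) (fun k => hf _) (fun k => hg _)
    have hQ : ‖Q‖ ≤ R := norm_prod_ofFn_le _ _ fun k => hg _
    have hsplit : f 0 * P - g 0 * Q = f 0 * (P - Q) + (f 0 - g 0) * Q := by noncomm_ring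
    rw [List.ofFn_succ, List.ofFn_succ, List.prod_cons, List.prod_cons, hsplit,
      Fin.sum_univ_succ, Fin.prod_univ_succ]
    calc ‖f 0 * (P - Q) + (f 0 - g 0) * Q‖
        ≤ r 0 * ((∑ k : Fin n, ‖f k.succ - g k.succ‖) * R) + ‖f 0 - g 0‖ * R := by
          refine (norm_add_le _ _).trans (add_le_add ?_ ?_)
          · exact (norm_mul_le _ _).trans
              (mul_le_mul (hf 0) hPQ (norm_nonneg _) (zero_le_one.trans (hr 0)))
          · exact (norm_mul_le _ _).trans (mul_le_mul_of_nonneg_left hQ (norm_nonneg _))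
      _ ≤ r 0 * ((∑ k : Fin n, ‖f k.succ - g k.succ‖) * R) + ‖f 0 - g 0‖ * (r 0 * R) := by
          gcongr
          exact le_mul_of_one_le_left hR (hr 0)
      _ = (‖f 0 - g 0‖ + ∑ k : Fin n, ‖f k.succ - g k.succ‖) * (r 0 * R) := by ring

end Telescoping

section Exponential

variable {A : Type*} [NormedRing A] [NormedAlgebra ℝ A] [CompleteSpace A]

theorem exp_add_smul (K : A) (s u : ℝ) : exp ((s + u) • K) = exp (s • K) * exp (u • K) := by
  rw [add_smul]
  exact exp_add_of_commute_of_mem_ball (𝕂 := ℝ) (((Commute.refl K).smul_left s).smul_right u)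
    ((expSeries_radius_eq_top ℝ A).symm ▸ edist_lt_top _ _)
    ((expSeries_radius_eq_top ℝ A).symm ▸ edist_lt_top _ _)

theorem exp_sum_smul_eq_prod_ofFn (K : A) {n : ℕ} (t : Fin n → ℝ) :
    exp ((∑ k, t k) • K) = (List.ofFn fun k => exp (t k • K)).prod := by
  induction n with
  | zero => simp
  | succ n ih => rw [Fin.sum_univ_succ, exp_add_smul, ih, List.ofFn_succ, List.prod_cons]

variable [NormOneClass A]

theorem norm_exp_sub_sum_range_le (x : A) (n : ℕ) :
    ‖exp x - ∑ m ∈ range n, (m !⁻¹ : ℝ) • x ^ m‖ ≤ ‖x‖ ^ n * Real.exp ‖x‖ := by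
  have htail : HasSum (fun m => ((m + n)!⁻¹ : ℝ) • x ^ (m + n))
      (exp x - ∑ m ∈ range n, (m !⁻¹ : ℝ) • x ^ m) :=
    (hasSum_nat_add_iff' n).mpr (exp_series_hasSum_exp' x)
  have hreal : HasSum (fun m => ‖x‖ ^ n * (‖x‖ ^ m / m !)) (‖x‖ ^ n * Real.exp ‖x‖) := by
    rw [Real.exp_eq_exp_ℝ]
    exact (expSeries_div_hasSum_exp ‖x‖).mul_left _
  refine htail.norm_le_of_bounded hreal fun m => ?_
  rw [norm_smul, norm_inv, Real.norm_natCast]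
  calc ((m + n)! : ℝ)⁻¹ * ‖x ^ (m + n)‖ ≤ (m ! : ℝ)⁻¹ * ‖x‖ ^ (m + n) := by
        gcongr
        · exact Nat.le_add_right m n
        · exact norm_pow_le x _
    _ = ‖x‖ ^ n * (‖x‖ ^ m / m !) := by ring

theorem norm_exp_le (x : A) : ‖exp x‖ ≤ Real.exp ‖x‖ := by
  simpa using norm_exp_sub_sum_range_le x 0

theorem norm_exp_sub_one_sub_le (x : A) : ‖exp x - 1 - x‖ ≤ ‖x‖ ^ 2 * Real.exp ‖x‖ := by
  simpa [sum_range_succ, sub_sub] using norm_exp_sub_sum_range_le x 2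

theorem norm_exp_smul_le (K : A) {s : ℝ} (hs : 0 ≤ s) : ‖exp (s • K)‖ ≤ Real.exp (s * ‖K‖) := by
  simpa [norm_smul, abs_of_nonneg hs] using norm_exp_le (s • K)

end Exponential

section Infinitesimal

variable {A : Type*} [NormedRing A] [NormOneClass A] [NormedAlgebra ℝ A]
  {y K : A} {M s : ℝ}

theorem norm_le_exp_of_norm_sub_one_sub_smul_le (hM : 0 ≤ M) (hs0 : 0 ≤ s) (hs1 : s ≤ 1)
    (h : ‖y - 1 - s • K‖ ≤ M * s ^ 2) : ‖y‖ ≤ Real.exp (s * (‖K‖ + M)) := by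
  have hy : y = (y - 1 - s • K) + (1 + s • K) := by abel
  have hMs : M * s ^ 2 ≤ M * s := by gcongr; nlinarith
  calc ‖y‖ ≤ M * s ^ 2 + (1 + s * ‖K‖) := by
        rw [hy]
        refine (norm_add_le _ _).trans (add_le_add h ((norm_add_le _ _).trans ?_))
        rw [norm_one, norm_smul, Real.norm_of_nonneg hs0]
    _ ≤ s * (‖K‖ + M) + 1 := by linarith
    _ ≤ Real.exp (s * (‖K‖ + M)) := Real.add_one_le_exp _

theorem norm_sub_exp_smul_le [CompleteSpace A] (hs0 : 0 ≤ s) (h : ‖y - 1 - s • K‖ ≤ M * s ^ 2) :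
    ‖y - exp (s • K)‖ ≤ s ^ 2 * (M + ‖K‖ ^ 2 * Real.exp (s * ‖K‖)) := by
  have hK : ‖s • K‖ = s * ‖K‖ := by rw [norm_smul, Real.norm_of_nonneg hs0]
  have hexp := norm_exp_sub_one_sub_le (s • K)
  rw [hK] at hexp
  calc ‖y - exp (s • K)‖ = ‖(y - 1 - s • K) - (exp (s • K) - 1 - s • K)‖ := by congr 1; abel
    _ ≤ M * s ^ 2 + (s * ‖K‖) ^ 2 * Real.exp (s * ‖K‖) :=
        (norm_sub_le _ _).trans (add_le_add h hexp)
    _ = s ^ 2 * (M + ‖K‖ ^ 2 * Real.exp (s * ‖K‖)) := by ring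

end Infinitesimal

theorem sum_sq_le_iSup_mul_sum {ι : Type*} [Fintype ι] (t : ι → ℝ) (ht : ∀ k, 0 ≤ t k) :
    ∑ k, t k ^ 2 ≤ (⨆ k, t k) * ∑ k, t k := by
  rw [mul_sum]
  refine sum_le_sum fun k _ => ?_
  rw [sq]
  exact mul_le_mul_of_nonneg_right (le_ciSup (Set.finite_range t).bddAbove k) (ht k)

theorem stmt_7_general {A : Type*} [NormedRing A] [NormOneClass A] [NormedAlgebra ℂ A]
    [CompleteSpace A] (K : A) (M δ : ℝ) (hM : 0 ≤ M) (hδ1 : δ ≤ 1)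
    (Y : ℝ → A)
    (hY : ∀ s ∈ Set.Ioc (0 : ℝ) δ, ‖Y s - 1 - s • K‖ ≤ M * s ^ 2) :
    ∀ (n : ℕ) (t : Fin n → ℝ), (∀ k, t k ∈ Set.Ioc (0 : ℝ) δ) →
      ‖(List.ofFn fun k => Y (t k)).prod - NormedSpace.exp ((∑ k, t k) • K)‖ ≤
        (⨆ k, t k) * (∑ k, t k) * Real.exp ((∑ k, t k) * (‖K‖ + M))
          * (M + ‖K‖ ^ 2 * Real.exp ((∑ k, t k) * ‖K‖)) := by
  intro n t ht
  set S := ∑ k, t k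
  set C := M + ‖K‖ ^ 2 * Real.exp (S * ‖K‖)
  have ht0 k : 0 ≤ t k := (ht k).1.le
  have hYK k := hY (t k) (ht k)
  have hdiff k : ‖Y (t k) - exp (t k • K)‖ ≤ t k ^ 2 * C := by
    refine (norm_sub_exp_smul_le (ht0 k) (hYK k)).trans ?_
    have htS : t k ≤ S := single_le_sum (fun j _ => ht0 j) (mem_univ k)
    unfold C
    gcongr
  have hone_le k : 1 ≤ Real.exp (t k * (‖K‖ + M)) :=
    Real.one_le_exp (mul_nonneg (ht0 k) (by positivity))
  have hY_le k : ‖Y (t k)‖ ≤ Real.exp (t k * (‖K‖ + M)) :=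
    norm_le_exp_of_norm_sub_one_sub_smul_le hM (ht0 k) ((ht k).2.trans hδ1) (hYK k)
  have hexp_le k : ‖exp (t k • K)‖ ≤ Real.exp (t k * (‖K‖ + M)) :=
    (norm_exp_smul_le K (ht0 k)).trans (Real.exp_le_exp.2 (by nlinarith [ht0 k]))
  rw [exp_sum_smul_eq_prod_ofFn]
  refine (norm_prod_ofFn_sub_prod_ofFn_le _ _ _ hone_le hY_le hexp_le).trans ?_
  rw [← Real.exp_sum, ← sum_mul]
  calc (∑ k, ‖Y (t k) - exp (t k • K)‖) * Real.exp (S * (‖K‖ + M))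
      ≤ ((∑ k, t k ^ 2) * C) * Real.exp (S * (‖K‖ + M)) := by
        gcongr
        rw [sum_mul]
        exact sum_le_sum fun k _ => hdiff k
    _ ≤ ((⨆ k, t k) * S * C) * Real.exp (S * (‖K‖ + M)) := by
        gcongr
        exact sum_sq_le_iSup_mul_sum t ht0
    _ = (⨆ k, t k) * S * Real.exp (S * (‖K‖ + M)) * C := by ring

/-- The Banach-algebra content of Proposition 3.3(1): under the infinitesimal hypothesis
`‖Y s − 1 − s K‖ ≤ M s²` on `(0, δ]` (with `δ ≤ 1`), for every tuple `t = (t₁, …, tₙ)` with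
`0 < tₖ ≤ δ`, writing `t := Σ tₖ` and `‖t‖ := max tₖ`,
`‖Y(t₁)⋯Y(tₙ) − exp (t K)‖ ≤ ‖t‖ · t · exp (t (‖K‖ + M)) · (M + ‖K‖² exp (t ‖K‖))`. -/
theorem stmt_7 {A : Type*} [NormedRing A] [NormOneClass A] [NormedAlgebra ℂ A]
    [CompleteSpace A] (K : A) (M δ : ℝ) (hM : 0 ≤ M) (hδ0 : 0 < δ) (hδ1 : δ ≤ 1)
    (Y : ℝ → A)
    (hY : ∀ s ∈ Set.Ioc (0 : ℝ) δ, ‖Y s - 1 - s • K‖ ≤ M * s ^ 2) :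
    ∀ (n : ℕ) (t : Fin n → ℝ), (∀ k, t k ∈ Set.Ioc (0 : ℝ) δ) →
      ‖(List.ofFn fun k => Y (t k)).prod - NormedSpace.exp ((∑ k, t k) • K)‖ ≤
        (⨆ k, t k) * (∑ k, t k) * Real.exp ((∑ k, t k) * (‖K‖ + M))
          * (M + ‖K‖ ^ 2 * Real.exp ((∑ k, t k) * ‖K‖)) :=
  stmt_7_general K M δ hM hδ1 Y hY
end

section
/- Let A be a unital complex Banach algebra, a, b ∈ A, and κ, λ ∈ ℂ with κ + λ = 1. Then for every t ≥ 0, lim_{n→∞} (κ·exp(ta/n) + λ·exp(tb/n))^n = exp(t(κa + λb)) in the norm of A. -/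
/-!
Chernoff's argument. Put `Y s = κ exp (s a) + λ exp (s b)` and `c = κ a + λ b`. Because
`κ + λ = 1`, `Y s = 1 + s c + O(s²)`, exactly like `exp (s c)`; so `Y (t/n)` and
`exp ((t/n) c)` differ by `O(1/n²)` and both have norm at most `1 + L/n`. Telescoping,
`‖xⁿ - yⁿ‖ ≤ n Mⁿ⁻¹ ‖x - y‖` with `Mⁿ⁻¹ ≤ (1 + L/n)ⁿ ≤ e^L`, so the `n`-th powers differ by
`O(1/n)`, while `exp ((t/n) c)ⁿ = exp (t c)`.
-/

open Filter Asymptotics NormedSpace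
open scoped Topology

theorem norm_pow_succ_sub_pow_succ_le {R : Type*} [NormedRing R] {x y : R} {M : ℝ}
    (hx : ‖x‖ ≤ M) (hy : ‖y‖ ≤ M) (n : ℕ) :
    ‖x ^ (n + 1) - y ^ (n + 1)‖ ≤ (n + 1) * M ^ n * ‖x - y‖ := by
  induction n with
  | zero => simp
  | succ n ih =>
    have hM : 0 ≤ M := (norm_nonneg x).trans hx
    have hyn : ‖y ^ (n + 1)‖ ≤ M ^ (n + 1) :=
      (norm_pow_le' y n.succ_pos).trans (pow_le_pow_left₀ (norm_nonneg y) hy _)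
    calc ‖x ^ (n + 1 + 1) - y ^ (n + 1 + 1)‖
        = ‖x * (x ^ (n + 1) - y ^ (n + 1)) + (x - y) * y ^ (n + 1)‖ := by
          rw [pow_succ' x, pow_succ' y, mul_sub, sub_mul]; abel_nf
      _ ≤ ‖x‖ * ‖x ^ (n + 1) - y ^ (n + 1)‖ + ‖x - y‖ * ‖y ^ (n + 1)‖ :=
          norm_add_le_of_le (norm_mul_le _ _) (norm_mul_le _ _)
      _ ≤ M * ((n + 1) * M ^ n * ‖x - y‖) + ‖x - y‖ * M ^ (n + 1) := by gcongr
      _ = (↑(n + 1) + 1) * M ^ (n + 1) * ‖x - y‖ := by push_cast; ring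

section NormOneClass

variable {R : Type*} [NormedRing R] [NormOneClass R]

theorem exists_eventually_norm_le_one_add_div {X : ℕ → R}
    (hX : (fun n => X n - 1) =O[atTop] fun n => (n : ℝ)⁻¹) :
    ∃ L, 0 ≤ L ∧ ∀ᶠ n : ℕ in atTop, ‖X n‖ ≤ 1 + L / n := by
  obtain ⟨L, hL, hbound⟩ := hX.exists_nonneg
  refine ⟨L, hL, hbound.bound.mono fun n hn => ?_⟩
  calc ‖X n‖ ≤ ‖(1 : R)‖ + ‖X n - 1‖ := norm_le_norm_add_norm_sub' _ _
    _ ≤ 1 + L / n := by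
      rw [norm_one]; simpa [div_eq_mul_inv] using hn

theorem tendsto_pow_sub_pow_of_isLittleO {X Y : ℕ → R}
    (hX : (fun n => X n - 1) =O[atTop] fun n => (n : ℝ)⁻¹)
    (hY : (fun n => Y n - 1) =O[atTop] fun n => (n : ℝ)⁻¹)
    (hXY : (fun n => X n - Y n) =o[atTop] fun n => (n : ℝ)⁻¹) :
    Tendsto (fun n => X n ^ n - Y n ^ n) atTop (𝓝 0) := by
  obtain ⟨L₁, hL₁, hX₁⟩ := exists_eventually_norm_le_one_add_div hX
  obtain ⟨L₂, hL₂, hY₂⟩ := exists_eventually_norm_le_one_add_div hY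
  have hlim : Tendsto (fun n : ℕ => n * ‖X n - Y n‖) atTop (𝓝 0) := by
    simpa [div_inv_eq_mul, mul_comm] using hXY.norm_left.tendsto_div_nhds_zero
  have hbound : ∀ᶠ n : ℕ in atTop,
      ‖X n ^ n - Y n ^ n‖ ≤ Real.exp (L₁ + L₂) * (n * ‖X n - Y n‖) := by
    filter_upwards [hX₁, hY₂, eventually_ne_atTop 0] with n hXn hYn hn
    obtain ⟨m, rfl⟩ := Nat.exists_eq_add_one_of_ne_zero hn
    have hMexp : (1 + (L₁ + L₂) / ↑(m + 1)) ^ (m + 1) ≤ Real.exp (L₁ + L₂) := by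
      have h := Real.one_sub_div_pow_le_exp_neg (n := m + 1) (t := -(L₁ + L₂))
        ((neg_nonpos.2 (add_nonneg hL₁ hL₂)).trans (Nat.cast_nonneg _))
      rwa [neg_div, sub_neg_eq_add, neg_neg] at h
    have hM : 1 ≤ 1 + (L₁ + L₂) / ↑(m + 1) := le_add_of_nonneg_right (by positivity)
    have hXM : ‖X (m + 1)‖ ≤ 1 + (L₁ + L₂) / ↑(m + 1) := hXn.trans (by gcongr; linarith)
    have hYM : ‖Y (m + 1)‖ ≤ 1 + (L₁ + L₂) / ↑(m + 1) := hYn.trans (by gcongr; linarith)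
    generalize 1 + (L₁ + L₂) / ↑(m + 1) = M at hMexp hM hXM hYM
    calc ‖X (m + 1) ^ (m + 1) - Y (m + 1) ^ (m + 1)‖
        ≤ (m + 1) * M ^ m * ‖X (m + 1) - Y (m + 1)‖ := norm_pow_succ_sub_pow_succ_le hXM hYM m
      _ = M ^ m * (↑(m + 1) * ‖X (m + 1) - Y (m + 1)‖) := by push_cast; ring
      _ ≤ M ^ (m + 1) * (↑(m + 1) * ‖X (m + 1) - Y (m + 1)‖) := by
          gcongr
          exact m.le_succ
      _ ≤ Real.exp (L₁ + L₂) * (↑(m + 1) * ‖X (m + 1) - Y (m + 1)‖) := by gcongr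
  rw [tendsto_zero_iff_norm_tendsto_zero]
  refine squeeze_zero' (Eventually.of_forall fun n => norm_nonneg _) hbound ?_
  simpa using hlim.const_mul (Real.exp (L₁ + L₂))

end NormOneClass

theorem isBigO_comp_div_natCast {E : Type*} [Norm E] {f : ℝ → E} {k : ℕ}
    (hf : f =O[𝓝 0] fun s => s ^ k) (t : ℝ) :
    (fun n : ℕ => f (t / n)) =O[atTop] fun n => ((n : ℝ) ^ k)⁻¹ := by
  refine (hf.comp_tendsto (tendsto_const_div_atTop_nhds_zero_nat t)).trans ?_
  simpa only [Function.comp_def, div_eq_mul_inv, mul_pow, inv_pow] using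
    isBigO_const_mul_self (t ^ k) (fun n : ℕ => ((n : ℝ) ^ k)⁻¹) atTop

theorem isLittleO_inv_sq_inv_natCast :
    (fun n : ℕ => ((n : ℝ) ^ 2)⁻¹) =o[atTop] fun n => (n : ℝ)⁻¹ := by
  have h := (isBigO_refl (fun n : ℕ => (n : ℝ)⁻¹) atTop).mul_isLittleO
    ((isLittleO_one_iff ℝ).2 (tendsto_inv_atTop_zero.comp tendsto_natCast_atTop_atTop))
  simpa [sq, Function.comp_def] using h

section RealAlgebra

variable {A : Type*} [NormedRing A] [NormedAlgebra ℝ A] [CompleteSpace A]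

theorem isBigO_exp_sub_one_sub :
    (fun x : A => exp x - 1 - x) =O[𝓝 0] fun x => ‖x‖ ^ 2 := by
  simpa [FormalMultilinearSeries.partialSum, Finset.sum_range_succ, sub_sub, expSeries_apply_eq]
    using (exp_hasFPowerSeriesAt_zero (𝕂 := ℝ) (𝔸 := A)).isBigO_sub_partialSum_pow 2

theorem isBigO_exp_smul_sub_one_sub (c : A) :
    (fun s : ℝ => exp (s • c) - 1 - s • c) =O[𝓝 0] fun s => s ^ 2 := by
  have hc : Tendsto (fun s : ℝ => s • c) (𝓝 0) (𝓝 0) := by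
    simpa using (tendsto_id (x := 𝓝 (0 : ℝ))).smul_const c
  refine (isBigO_exp_sub_one_sub.comp_tendsto hc).trans (isBigO_of_le' (c := ‖c‖ ^ 2) _ fun s => ?_)
  simp [norm_smul, mul_pow, mul_comm]

theorem exp_div_smul_pow (c : A) (t : ℝ) {n : ℕ} (hn : n ≠ 0) :
    exp ((t / n) • c) ^ n = exp (t • c) := by
  let _ : NormedAlgebra ℚ A := .restrictScalars ℚ ℝ A
  rw [← exp_nsmul, ← Nat.cast_smul_eq_nsmul ℝ, smul_smul, mul_div_cancel₀ _ (Nat.cast_ne_zero.2 hn)]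

theorem isBigO_smul_exp_add_smul_exp_sub_one_sub {𝕂 : Type*} [NormedField 𝕂] [NormedSpace 𝕂 A]
    [SMulCommClass ℝ 𝕂 A] {κ μ : 𝕂} (h : κ + μ = 1) (a b : A) :
    (fun s : ℝ => κ • exp (s • a) + μ • exp (s • b) - 1 - s • (κ • a + μ • b))
      =O[𝓝 0] fun s => s ^ 2 := by
  refine (((isBigO_exp_smul_sub_one_sub a).const_smul_left κ).add
    ((isBigO_exp_smul_sub_one_sub b).const_smul_left μ)).congr_left fun s => ?_
  rw [Pi.smul_apply, Pi.smul_apply, smul_add, smul_comm s κ a, smul_comm s μ b]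
  generalize s • a = x
  generalize s • b = y
  linear_combination (norm := module) h • (-1 : A)

variable [NormOneClass A]

theorem tendsto_pow_div_of_isBigO {Y : ℝ → A} {c : A}
    (hY : (fun s => Y s - 1 - s • c) =O[𝓝 0] fun s => s ^ 2) (t : ℝ) :
    Tendsto (fun n : ℕ => Y (t / n) ^ n) atTop (𝓝 (exp (t • c))) := by
  have hexp := isBigO_exp_smul_sub_one_sub c
  have hlin : (fun s : ℝ => s • c) =O[𝓝 0] fun s => s ^ 1 :=
    isBigO_of_le' (c := ‖c‖) _ fun s => by simp [norm_smul, mul_comm]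
  have first_order : ∀ Z : ℝ → A, (fun s => Z s - 1 - s • c) =O[𝓝 0] (· ^ 2) →
      (fun n : ℕ => Z (t / n) - 1) =O[atTop] fun n => (n : ℝ)⁻¹ := fun Z hZ =>
    (((isBigO_comp_div_natCast hZ t).trans isLittleO_inv_sq_inv_natCast.isBigO).add
      (by simpa using isBigO_comp_div_natCast hlin t)).congr_left fun n => sub_add_cancel _ _
  have hdiff : (fun n : ℕ => Y (t / n) - exp ((t / n) • c)) =o[atTop] fun n => (n : ℝ)⁻¹ := by
    refine (isBigO_comp_div_natCast (hY.sub hexp) t).trans_isLittleO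
      isLittleO_inv_sq_inv_natCast |>.congr_left fun n => ?_
    abel
  have := (tendsto_pow_sub_pow_of_isLittleO (first_order Y hY) (first_order _ hexp) hdiff).add_const
    (exp (t • c))
  refine (zero_add (exp (t • c)) ▸ this).congr' ?_
  filter_upwards [eventually_ne_atTop 0] with n hn
  rw [exp_div_smul_pow c t hn, sub_add_cancel]

end RealAlgebra

theorem stmt_10_general {A : Type*} [NormedRing A] [NormOneClass A] [NormedAlgebra ℂ A]
    [CompleteSpace A] (a b : A) (κ lam : ℂ) (hκlam : κ + lam = 1) (t : ℝ) :
    Tendsto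
      (fun n : ℕ =>
        (κ • NormedSpace.exp ((t / n) • a) + lam • NormedSpace.exp ((t / n) • b)) ^ n)
      atTop (nhds (NormedSpace.exp (t • (κ • a + lam • b)))) :=
  tendsto_pow_div_of_isBigO (isBigO_smul_exp_add_smul_exp_sub_one_sub hκlam a b) t

/-- The affine-combination Trotter product (Section 1 and Section 4.2): for complex
coefficients `κ + λ = 1`, `(κ exp (t a / n) + λ exp (t b / n))ⁿ → exp (t (κ a + λ b))`
in norm. -/
theorem stmt_10 {A : Type*} [NormedRing A] [NormOneClass A] [NormedAlgebra ℂ A]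
    [CompleteSpace A] (a b : A) (κ lam : ℂ) (hκlam : κ + lam = 1) (t : ℝ) (ht : 0 ≤ t) :
    Tendsto
      (fun n : ℕ =>
        (κ • NormedSpace.exp ((t / n) • a) + lam • NormedSpace.exp ((t / n) • b)) ^ n)
      atTop (nhds (NormedSpace.exp (t • (κ • a + lam • b)))) :=
  stmt_10_general a b κ lam hκlam t
end

section
/- Let B be a unital C*-algebra and S a set. For each t > 0 let R_t : S → S → (B →L[ℂ] B) be a completely positive definite kernel, and suppose Q : S → S → (B →L[ℂ] B) is such that for all σ, σ' ∈ S and all b ∈ B, (R_t(σ, σ')(b) − b)/t converges in norm to Q(σ, σ')(b) as t → 0⁺. Then Q is conditionally completely positive definite. -/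
open Filter

/-- A kernel `K : S → S → B(B)` is completely positive definite if
`Σ_{i,j} bᵢ* K(σᵢ,σⱼ)(aᵢ* aⱼ) bⱼ ≥ 0` for all finite choices (condition (2.1)). -/
def IsCPDKernel {B : Type*} [CStarAlgebra B] [PartialOrder B] [StarOrderedRing B]
    {S : Type*} (K : S → S → (B →L[ℂ] B)) : Prop :=
  ∀ (n : ℕ) (σ : Fin n → S) (a b : Fin n → B),
    0 ≤ ∑ i, ∑ j, star (b i) * K (σ i) (σ j) (star (a i) * a j) * b j

/-- A kernel is conditionally completely positive definite if (2.1) holds whenever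
`Σᵢ aᵢ bᵢ = 0`. -/
def IsCCPDKernel {B : Type*} [CStarAlgebra B] [PartialOrder B] [StarOrderedRing B]
    {S : Type*} (K : S → S → (B →L[ℂ] B)) : Prop :=
  ∀ (n : ℕ) (σ : Fin n → S) (a b : Fin n → B), ∑ i, a i * b i = 0 →
    0 ≤ ∑ i, ∑ j, star (b i) * K (σ i) (σ j) (star (a i) * a j) * b j

/-- The concluding step of the proof of Lemma 3.1: if each `R_t` (`t > 0`) is completely
positive definite and `(R_t(σ,σ')(b) − b)/t → Q(σ,σ')(b)` in norm as `t → 0⁺`, then `Q` is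
conditionally completely positive definite. -/
theorem stmt_15 {B : Type*} [CStarAlgebra B] [PartialOrder B] [StarOrderedRing B]
    {S : Type*} (R : ℝ → S → S → (B →L[ℂ] B)) (Q : S → S → (B →L[ℂ] B))
    (hR : ∀ t : ℝ, 0 < t → IsCPDKernel (R t))
    (hlim : ∀ (σ σ' : S) (b : B),
      Tendsto (fun t : ℝ => t⁻¹ • (R t σ σ' b - b)) (nhdsWithin 0 (Set.Ioi 0))
        (nhds (Q σ σ' b))) :
    IsCCPDKernel Q := by
  intro n σ a b hab
  set f : ℝ → B := fun t => ∑ i, ∑ j,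
    star (b i) * (t⁻¹ • (R t (σ i) (σ j) (star (a i) * a j) - star (a i) * a j)) * b j with hf
  have hZ : ∑ i, ∑ j, star (b i) * (star (a i) * a j) * b j = 0 := by
    have : ∑ i, ∑ j, star (b i) * (star (a i) * a j) * b j
        = star (∑ i, a i * b i) * ∑ j, a j * b j := by
      rw [star_sum, Finset.sum_mul_sum]
      exact Finset.sum_congr rfl fun i _ => Finset.sum_congr rfl fun j _ => by
        simp [star_mul, mul_assoc]
    rw [this, hab]; simp
  have hfpos : ∀ t ∈ Set.Ioi (0:ℝ), 0 ≤ f t := by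
    intro t ht
    have : f t = t⁻¹ • ∑ i, ∑ j,
        star (b i) * R t (σ i) (σ j) (star (a i) * a j) * b j := by
      simp only [hf, smul_sub, mul_sub, sub_mul, mul_smul_comm, smul_mul_assoc,
        Finset.sum_sub_distrib, ← Finset.smul_sum, hZ, smul_zero, sub_zero]
    rw [this]
    exact smul_nonneg (inv_nonneg.mpr ht.out.le) (hR t ht n σ a b)
  have hft : Tendsto f (nhdsWithin 0 (Set.Ioi 0))
      (nhds (∑ i, ∑ j, star (b i) * Q (σ i) (σ j) (star (a i) * a j) * b j)) := by
    apply tendsto_finset_sum; intro i _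
    apply tendsto_finset_sum; intro j _
    exact ((hlim (σ i) (σ j) (star (a i) * a j)).const_mul _).mul_const _
  exact ge_of_tendsto hft (eventually_nhdsWithin_of_forall hfpos)
end
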